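/- Any nonnegative integrable α on [0,T] satisfying ∫_0^T α(t) dt = ln σ_s − ln σ_0 + aT and ∫_0^t α(s) ds ≥ ln σ_M − ln σ_0 + a t for all t ∈ [0,T] minimizes P(α) = ∫_0^T α(t) dt among all nonnegative controls satisfying the constraints σ(T) ≥ σ_s and σ(t) ≥ σ_M for all t ∈ [0,T]. -/

import Mathlib

open MeasureTheory Real intervalIntegral

/-! The terminal constraint `σ(T) ≥ σ_s` alone forces every admissible control to spend at least
`ln σ_s − ln σ₀ + aT`, and `α` spends exactly that much. -/

lemma Real.log_sub_log_le_of_le_mul_exp {c σ x : ℝ} (hσ : 0 < σ) (hc : 0 < c)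
    (h : c ≤ σ * exp x) : log c - log σ ≤ x := by
  have := log_le_log hc h
  rw [log_mul hσ.ne' (exp_ne_zero x), log_exp] at this
  linarith

theorem optimal_control_of_anger_general (a σM σ₀ σs T : ℝ) (hσM : 0 < σM)
    (h₀ : σM < σ₀) (hs : σ₀ < σs)
    (α : ℝ → ℝ)
    (hαeq : (∫ t in (0:ℝ)..T, α t) = Real.log σs - Real.log σ₀ + a * T) :
    ∀ β : ℝ → ℝ, IntervalIntegrable β volume 0 T → (∀ t, 0 ≤ β t) →
      σ₀ * Real.exp (-a * T + ∫ s in (0:ℝ)..T, β s) ≥ σs →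
      (∀ t ∈ Set.Icc (0:ℝ) T,
        σ₀ * Real.exp (-a * t + ∫ s in (0:ℝ)..t, β s) ≥ σM) →
      (∫ t in (0:ℝ)..T, α t) ≤ ∫ t in (0:ℝ)..T, β t := by
  intro β _ _ hβT _
  have hσ₀ : 0 < σ₀ := hσM.trans h₀
  have hβ_lower := log_sub_log_le_of_le_mul_exp hσ₀ (hσ₀.trans hs) hβT
  rw [hαeq]
  linarith

/-- Any nonnegative integrable control `α` whose total effort equals
`ln σ_s − ln σ₀ + aT` and whose partial efforts dominate `ln σ_M − ln σ₀ + at`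
minimizes the total effort among all admissible controls for problem 𝒫. -/
theorem optimal_control_of_anger (a σM σ₀ σs T : ℝ) (ha : 0 < a) (hσM : 0 < σM)
    (h₀ : σM < σ₀) (hs : σ₀ < σs) (hT : 0 < T)
    (α : ℝ → ℝ) (hα : IntervalIntegrable α volume 0 T) (hαpos : ∀ t, 0 ≤ α t)
    (hαeq : (∫ t in (0:ℝ)..T, α t) = Real.log σs - Real.log σ₀ + a * T)
    (hαineq : ∀ t ∈ Set.Icc (0:ℝ) T,
      (∫ s in (0:ℝ)..t, α s) ≥ Real.log σM - Real.log σ₀ + a * t) :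
    ∀ β : ℝ → ℝ, IntervalIntegrable β volume 0 T → (∀ t, 0 ≤ β t) →
      σ₀ * Real.exp (-a * T + ∫ s in (0:ℝ)..T, β s) ≥ σs →
      (∀ t ∈ Set.Icc (0:ℝ) T,
        σ₀ * Real.exp (-a * t + ∫ s in (0:ℝ)..t, β s) ≥ σM) →
      (∫ t in (0:ℝ)..T, α t) ≤ ∫ t in (0:ℝ)..T, β t :=
  optimal_control_of_anger_general a σM σ₀ σs T hσM h₀ hs α hαeq
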